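/- Let u_s be C² on the closure of Ω and let v be C¹ on the closure of Ω with v = 0 on {y = 0} ∪ {y = 2}. Then ∫_Ω ( −u_s ∂_y v + v ∂_y u_s ) (−∂_y v) + ∫_Ω u_s |∂_x v|² = ∫_Ω u_s ( |∂_y v|² + |∂_x v|² ) + (1/2) ∫_Ω (∂_{yy} u_s) v². -/

import Mathlib

open MeasureTheory Set Real Function

noncomputable section

/-- The channel domain `Ω = (0,L) × (0,2)`. -/
def Omg (L : ℝ) : Set (ℝ × ℝ) := Ioo (0:ℝ) L ×ˢ Ioo (0:ℝ) 2

/-- Partial derivative in the first (x) variable of a curried function. -/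
def pdx (f : ℝ → ℝ → ℝ) : ℝ → ℝ → ℝ := fun x y => deriv (fun s => f s y) x

/-- Partial derivative in the second (y) variable of a curried function. -/
def pdy (f : ℝ → ℝ → ℝ) : ℝ → ℝ → ℝ := fun x y => deriv (fun t => f x t) y

/-- Laplacian `Δ = ∂ₓₓ + ∂_{yy}`. -/
def plap (f : ℝ → ℝ → ℝ) : ℝ → ℝ → ℝ := fun x y => pdx (pdx f) x y + pdy (pdy f) x y

/-- Integral over `Ω`. -/
def intO (L : ℝ) (F : ℝ → ℝ → ℝ) : ℝ := ∫ p in Omg L, F p.1 p.2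

/-- `L²(Ω)` norm. -/
def l2 (L : ℝ) (f : ℝ → ℝ → ℝ) : ℝ := Real.sqrt (intO L fun x y => (f x y)^2)

/-- `L^∞(Ω)` (sup) norm. -/
def supO (L : ℝ) (f : ℝ → ℝ → ℝ) : ℝ := sSup ((fun p : ℝ × ℝ => |f p.1 p.2|) '' Omg L)

/-- `|∇f|²`. -/
def gradSq (f : ℝ → ℝ → ℝ) (x y : ℝ) : ℝ := (pdx f x y)^2 + (pdy f x y)^2

/-- Energy norm `‖u,v‖_E = ‖√ε ∇u‖_{L²(Ω)} + ‖√ε ∇v‖_{L²(Ω)}`. -/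
def normE (ε L : ℝ) (u v : ℝ → ℝ → ℝ) : ℝ :=
  Real.sqrt (intO L fun x y => ε * gradSq u x y) + Real.sqrt (intO L fun x y => ε * gradSq v x y)

/-- Positivity norm `‖u,v‖_P = ‖√(u_s) ∇v‖_{L²(Ω)}`. -/
def normP (L : ℝ) (us v : ℝ → ℝ → ℝ) : ℝ :=
  Real.sqrt (intO L fun x y => us x y * gradSq v x y)

/-- The `X` norm `‖u,v‖_X = ‖u,v‖_E + ε^{γ/2}(‖√ε u‖_∞ + ‖√ε v‖_∞)`. -/
def normX (ε γ L : ℝ) (u v : ℝ → ℝ → ℝ) : ℝ :=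
  normE ε L u v + ε ^ (γ/2) *
    (supO L (fun x y => Real.sqrt ε * u x y) + supO L (fun x y => Real.sqrt ε * v x y))

/-- Linearized convection term `S_u`. -/
def Su (us vs u v : ℝ → ℝ → ℝ) (x y : ℝ) : ℝ :=
  us x y * pdx u x y + pdx us x y * u x y + pdy us x y * v x y + vs x y * pdy u x y

/-- Linearized convection term `S_v`. -/
def Sv (us vs u v : ℝ → ℝ → ℝ) (x y : ℝ) : ℝ :=
  us x y * pdx v x y + pdx vs x y * u x y + vs x y * pdy v x y + pdy vs x y * v x y

/-- The `W^{100,∞}` norm of a function on `(0,2)`. -/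
def W100 (h : ℝ → ℝ) : ℝ :=
  sSup { r : ℝ | ∃ j ≤ 100, ∃ y ∈ Ioo (0:ℝ) 2, r = |deriv^[j] h y| }

/-!
`∂_y u_s · v · ∂_y v + ½ ∂_{yy} u_s · v² = ∂_y (½ ∂_y u_s · v²)`, and by Fubini and the
fundamental theorem of calculus in `y`, the integral of a `y`-derivative over `Ω` is the
difference of its values at `y = 2` and `y = 0`, which vanish with `v`. Expanding both
sides, the identity reduces to exactly this integration by parts.
-/

section PartialDerivatives

variable {f : ℝ → ℝ → ℝ}

theorem hasDerivAt_pdy {x y : ℝ} (hf : DifferentiableAt ℝ (uncurry f) (x, y)) :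
    HasDerivAt (f x) (pdy f x y) y :=
  (hf.comp y ((differentiableAt_const x).prodMk differentiableAt_id)).hasDerivAt

theorem pdy_eq_fderiv_apply {x y : ℝ} (hf : DifferentiableAt ℝ (uncurry f) (x, y)) :
    pdy f x y = fderiv ℝ (uncurry f) (x, y) (0, 1) :=
  (hf.hasFDerivAt.comp_hasDerivAt y ((hasDerivAt_const y x).prodMk (hasDerivAt_id y))).deriv

theorem ContDiff.uncurry_pdy {n : WithTop ℕ∞} (hf : ContDiff ℝ (n + 1) (uncurry f)) :
    ContDiff ℝ n (uncurry (pdy f)) := by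
  have hfd : Differentiable ℝ (uncurry f) := hf.differentiable (by simp)
  have hpdy : uncurry (pdy f) = fun p => fderiv ℝ (uncurry f) p (0, 1) :=
    funext fun p => pdy_eq_fderiv_apply (hfd p)
  rw [hpdy]
  exact (hf.fderiv_right le_rfl).clm_apply contDiff_const

theorem ContDiff.uncurry_pdx {n : WithTop ℕ∞} (hf : ContDiff ℝ (n + 1) (uncurry f)) :
    ContDiff ℝ n (uncurry (pdx f)) := by
  have hswap {m : WithTop ℕ∞} : ContDiff ℝ m (Prod.swap : ℝ × ℝ → ℝ × ℝ) :=
    contDiff_snd.prodMk contDiff_fst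
  have hflip : ContDiff ℝ (n + 1) (uncurry (flip f)) := by
    rw [uncurry_flip]; exact hf.comp hswap
  -- `uncurry (pdx f)` is definitionally `uncurry (pdy (flip f)) ∘ Prod.swap`
  exact hflip.uncurry_pdy.comp hswap

end PartialDerivatives

section IntegralsOverOmega

variable {L : ℝ}

theorem integrableOn_Omg {F : ℝ × ℝ → ℝ} (hF : Continuous F) : IntegrableOn F (Omg L) :=
  (hF.continuousOn.integrableOn_compact (isCompact_Icc.prod isCompact_Icc)).mono_set
    (prod_mono Ioo_subset_Icc_self Ioo_subset_Icc_self)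

variable {F G : ℝ → ℝ → ℝ}

theorem intO_add (hF : Continuous (uncurry F)) (hG : Continuous (uncurry G)) :
    intO L (fun x y => F x y + G x y) = intO L F + intO L G :=
  integral_add (integrableOn_Omg hF) (integrableOn_Omg hG)

theorem intO_sub (hF : Continuous (uncurry F)) (hG : Continuous (uncurry G)) :
    intO L (fun x y => F x y - G x y) = intO L F - intO L G :=
  integral_sub (integrableOn_Omg hF) (integrableOn_Omg hG)

theorem intO_const_mul (c : ℝ) (F : ℝ → ℝ → ℝ) :
    intO L (fun x y => c * F x y) = c * intO L F :=
  integral_const_mul c _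

theorem intO_pdy_eq_zero {g : ℝ → ℝ → ℝ} (hg : ContDiff ℝ 1 (uncurry g))
    (hbc : ∀ x ∈ Ioo (0:ℝ) L, g x 0 = 0 ∧ g x 2 = 0) :
    intO L (pdy g) = 0 := by
  have hgd : Differentiable ℝ (uncurry g) := hg.differentiable one_ne_zero
  have hcont : Continuous (uncurry (pdy g)) := (hg.uncurry_pdy (n := 0)).continuous
  have hslice : ∀ x ∈ Ioo (0:ℝ) L, ∫ y in Ioo (0:ℝ) 2, pdy g x y = 0 := by
    intro x hx
    change ∫ y in Ioo (0:ℝ) 2, deriv (g x) y = 0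
    rw [← integral_Ioc_eq_integral_Ioo, ← intervalIntegral.integral_of_le zero_le_two,
      intervalIntegral.integral_deriv_eq_sub
        (fun y _ => (hasDerivAt_pdy (hgd (x, y))).differentiableAt)
        ((hcont.comp (Continuous.prodMk_right x)).intervalIntegrable 0 2),
      (hbc x hx).1, (hbc x hx).2, sub_zero]
  rw [intO, Omg, Measure.volume_eq_prod, setIntegral_prod _
    (by rw [← Measure.volume_eq_prod]; exact integrableOn_Omg hcont)]
  exact setIntegral_eq_zero_of_forall_eq_zero hslice

theorem intO_pdy_mul_mul_pdy {a v : ℝ → ℝ → ℝ} (ha : ContDiff ℝ 2 (uncurry a))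
    (hv : ContDiff ℝ 1 (uncurry v)) (hbc : ∀ x ∈ Ioo (0:ℝ) L, v x 0 = 0 ∧ v x 2 = 0) :
    intO L (fun x y => pdy a x y * v x y * pdy v x y)
      = -(1/2) * intO L (fun x y => pdy (pdy a) x y * v x y ^ 2) := by
  have ha' : ContDiff ℝ 1 (uncurry (pdy a)) := ha.uncurry_pdy
  have hpdy_g : pdy (fun x y => pdy a x y * v x y ^ 2 / 2)
      = fun x y => pdy a x y * v x y * pdy v x y + 1/2 * (pdy (pdy a) x y * v x y ^ 2) := by
    funext x y
    have hd := ((hasDerivAt_pdy (ha'.differentiable one_ne_zero (x, y))).mul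
      ((hasDerivAt_pdy (hv.differentiable one_ne_zero (x, y))).pow 2)).div_const 2
    refine hd.deriv.trans ?_
    simp only [Pi.pow_apply]
    ring
  have hzero := intO_pdy_eq_zero (L := L) (g := fun x y => pdy a x y * v x y ^ 2 / 2)
    ((ha'.mul (hv.pow 2)).div_const 2)
    (fun x hx => by simp [(hbc x hx).1, (hbc x hx).2])
  rw [hpdy_g, intO_add, intO_const_mul] at hzero
  · linarith
  · exact (ha'.continuous.mul hv.continuous).mul (hv.uncurry_pdy (n := 0)).continuous
  · exact continuous_const.mul ((ha'.uncurry_pdy (n := 0)).continuous.mul (hv.continuous.pow 2))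

end IntegralsOverOmega

theorem stmt18_general (L : ℝ)
    (us v : ℝ → ℝ → ℝ)
    (hus : ContDiff ℝ 2 (uncurry us)) (hv : ContDiff ℝ 1 (uncurry v))
    (hbc : ∀ x ∈ Icc (0:ℝ) L, v x 0 = 0 ∧ v x 2 = 0) :
    intO L (fun x y => (-(us x y * pdy v x y) + v x y * pdy us x y) * (-(pdy v x y)))
      + intO L (fun x y => us x y * (pdx v x y)^2)
    = intO L (fun x y => us x y * ((pdy v x y)^2 + (pdx v x y)^2))
      + (1/2) * intO L (fun x y => pdy (pdy us) x y * (v x y)^2) := by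
  have hpv : Continuous (uncurry (pdy v)) := (hv.uncurry_pdy (n := 0)).continuous
  have hpxv : Continuous (uncurry (pdx v)) := (hv.uncurry_pdx (n := 0)).continuous
  have hpus : Continuous (uncurry (pdy us)) := (hus.uncurry_pdy (n := 1)).continuous
  have hA : Continuous (uncurry fun x y => us x y * pdy v x y ^ 2) :=
    hus.continuous.mul (hpv.pow 2)
  have hB : Continuous (uncurry fun x y => us x y * pdx v x y ^ 2) :=
    hus.continuous.mul (hpxv.pow 2)
  have hD : Continuous (uncurry fun x y => pdy us x y * v x y * pdy v x y) :=
    (hpus.mul hv.continuous).mul hpv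
  have hlhs : intO L (fun x y => (-(us x y * pdy v x y) + v x y * pdy us x y) * (-(pdy v x y)))
      = intO L (fun x y => us x y * pdy v x y ^ 2)
        - intO L (fun x y => pdy us x y * v x y * pdy v x y) := by
    rw [← intO_sub hA hD]; congr; funext x y; ring
  have hrhs : intO L (fun x y => us x y * ((pdy v x y)^2 + (pdx v x y)^2))
      = intO L (fun x y => us x y * pdy v x y ^ 2)
        + intO L (fun x y => us x y * pdx v x y ^ 2) := by
    rw [← intO_add hA hB]; congr; funext x y; ring
  have hparts := intO_pdy_mul_mul_pdy (L := L) hus hv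
    fun x hx => hbc x (Ioo_subset_Icc_self hx)
  rw [hlhs, hrhs, hparts]
  ring

/-- the coercivity identity for the Rayleigh part of the linearized
operator under the multiplier `(−∂_y v, ∂_x v)`. -/
theorem stmt18 (L : ℝ) (hL0 : 0 < L) (hL1 : L ≤ 1)
    (us v : ℝ → ℝ → ℝ)
    (hus : ContDiff ℝ 2 (uncurry us)) (hv : ContDiff ℝ 1 (uncurry v))
    (hbc : ∀ x ∈ Icc (0:ℝ) L, v x 0 = 0 ∧ v x 2 = 0) :
    intO L (fun x y => (-(us x y * pdy v x y) + v x y * pdy us x y) * (-(pdy v x y)))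
      + intO L (fun x y => us x y * (pdx v x y)^2)
    = intO L (fun x y => us x y * ((pdy v x y)^2 + (pdx v x y)^2))
      + (1/2) * intO L (fun x y => pdy (pdy us) x y * (v x y)^2) :=
  stmt18_general L us v hus hv hbc
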